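/- arXiv:2604.05161 — 10 statements merged into one kernel-verified Lean document; each statement's English description precedes it below -/
import Mathlib

section
/- Every regular SMB algebra satisfies the identity x ∧ y ≈ d(y,y,x) ≈ d(x,y,y). Consequently, in a regular SMB algebra the clone of term operations is generated by the single operation d. -/
/-- A semilattice of Mal'cev blocks (SMB algebra): an idempotent algebra `(A; ∧, d)`
together with a congruence `sim` such that the quotient is a semilattice under `∧`,
and on each `sim`-class `∧` is first projection and `d` is Mal'cev. -/
structure SMB (A : Type) where
  meet : A → A → A
  d : A → A → A → A
  sim : A → A → Prop
  sim_equiv : Equivalence sim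
  sim_meet : ∀ {a b a' b'}, sim a a' → sim b b' → sim (meet a b) (meet a' b')
  sim_d : ∀ {a b c a' b' c'}, sim a a' → sim b b' → sim c c' → sim (d a b c) (d a' b' c')
  meet_idem : ∀ a, meet a a = a
  d_idem : ∀ a, d a a a = a
  meet_comm_sim : ∀ a b, sim (meet a b) (meet b a)
  meet_assoc_sim : ∀ a b c, sim (meet (meet a b) c) (meet a (meet b c))
  meet_proj : ∀ {a b}, sim a b → meet a b = a
  malcev_left : ∀ {a b}, sim a b → d a a b = b
  malcev_right : ∀ {a b}, sim a b → d b a a = b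

/-- A regular SMB algebra. -/
structure RegSMB (A : Type) extends SMB A where
  reg1 : ∀ a b c, sim (d a b c) (meet (meet a b) c)
  reg2 : ∀ a b, sim (meet a b) a → meet a b = a
  reg3 : ∀ x y z, d x y z = d (meet x (meet z y)) (meet y (meet z x)) (meet z (meet y x))
  reg4 : ∀ x y, meet x (meet x y) = meet x y

/-- `M` is the least `sim`-class of the SMB algebra `S`. -/
def SMB.IsMinClass {A : Type} (S : SMB A) (M : Set A) : Prop :=
  ∃ m, M = {x | S.sim x m} ∧ ∀ b, S.sim (S.meet m b) m

/-- A congruence of an SMB algebra. -/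
def SMB.IsCong {A : Type} (S : SMB A) (θ : A → A → Prop) : Prop :=
  Equivalence θ ∧
  (∀ a b a' b', θ a a' → θ b b' → θ (S.meet a b) (S.meet a' b')) ∧
  (∀ a b c a' b' c', θ a a' → θ b b' → θ c c' → θ (S.d a b c) (S.d a' b' c'))

def CongLE {A : Type} (α β : A → A → Prop) : Prop := ∀ a b, α a b → β a b

/-- `α ≺ β`: a covering pair of congruences. -/
def SMB.IsCover {A : Type} (S : SMB A) (α β : A → A → Prop) : Prop :=
  S.IsCong α ∧ S.IsCong β ∧ CongLE α β ∧ ¬ CongLE β α ∧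
  ∀ γ, S.IsCong γ → CongLE α γ → CongLE γ β → (CongLE γ α ∨ CongLE β γ)

/-- The Rees congruence `Δ ∪ M × M` of the least class `M`. -/
def reesCong {A : Type} (M : Set A) : A → A → Prop := fun a b => a = b ∨ (a ∈ M ∧ b ∈ M)

/-- Syntactic unary polynomials over the SMB signature with constants from `K`. -/
inductive PTerm (K : Type) : Type
  | var : PTerm K
  | const : K → PTerm K
  | meet : PTerm K → PTerm K → PTerm K
  | dd : PTerm K → PTerm K → PTerm K → PTerm K

def PTerm.eval {A K : Type} (S : SMB A) (κ : K → A) : PTerm K → A → A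
  | .var => fun x => x
  | .const k => fun _ => κ k
  | .meet p q => fun x => S.meet (p.eval S κ x) (q.eval S κ x)
  | .dd p q r => fun x => S.d (p.eval S κ x) (q.eval S κ x) (r.eval S κ x)

def MapsC {A B : Type} (f : A → B) (θ : A → A → Prop) (θ' : B → B → Prop) : Prop :=
  ∀ a b, θ a b → θ' (f a) (f b)

/-- `R` is a subdirect subuniverse of the product of the `A i`. -/
def SubdirectSMB {n : ℕ} {A : Fin n → Type} (S : ∀ i, SMB (A i)) (R : Set (∀ i, A i)) : Prop :=
  (∀ r ∈ R, ∀ s ∈ R, (fun i => (S i).meet (r i) (s i)) ∈ R) ∧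
  (∀ r ∈ R, ∀ s ∈ R, ∀ u ∈ R, (fun i => (S i).d (r i) (s i) (u i)) ∈ R) ∧
  (∀ i x, ∃ r ∈ R, r i = x)

/-- The `k`-th coordinate polynomial of a unary polynomial of `R` (given by a
syntactic polynomial with constants from `R`). -/
def coordEval {n : ℕ} {A : Fin n → Type} (S : ∀ i, SMB (A i)) (R : Set (∀ i, A i))
    (p : PTerm {r : ∀ i, A i // r ∈ R}) (k : Fin n) : A k → A k :=
  PTerm.eval (S k) (fun r => r.1 k) p

/-- `(i, α, β)` can be separated from `(j, γ, δ)` with respect to `R`. -/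
def SepWrt {n : ℕ} {A : Fin n → Type} (S : ∀ i, SMB (A i)) (R : Set (∀ i, A i))
    (i : Fin n) (α β : A i → A i → Prop) (j : Fin n) (γ δ : A j → A j → Prop) : Prop :=
  ∃ p : PTerm {r : ∀ i, A i // r ∈ R},
    ¬ MapsC (coordEval S R p i) β α ∧ MapsC (coordEval S R p j) δ γ

/-- `a` is an `αβ`-split element. -/
def SMB.IsSplit {A : Type} (S : SMB A) (α β : A → A → Prop) (a : A) : Prop :=
  ∃ b c, β b c ∧ ¬ α (S.meet a b) (S.meet a c)

/-- Unary polynomials of a single SMB algebra. -/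
def SMB.Pol1 {A : Type} (S : SMB A) (f : A → A) : Prop :=
  ∃ p : PTerm A, f = PTerm.eval S id p

/-- `(α,β)`-minimal sets of an SMB algebra. -/
def SMB.IsMinSet {A : Type} (S : SMB A) (α β : A → A → Prop) (U : Set A) : Prop :=
  ∃ f, S.Pol1 f ∧ Set.range f = U ∧ ¬ MapsC f β α ∧
    ∀ g, S.Pol1 g → ¬ MapsC g β α → Set.range g ⊆ U → Set.range g = U

/-- Terms over the SMB signature `{∧, d}` in `n` variables. -/
inductive STerm (n : ℕ) : Type
  | var : Fin n → STerm n
  | meet : STerm n → STerm n → STerm n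
  | dd : STerm n → STerm n → STerm n → STerm n

def STerm.eval {A : Type} {n : ℕ} (S : SMB A) : STerm n → (Fin n → A) → A
  | .var i => fun v => v i
  | .meet p q => fun v => S.meet (p.eval S v) (q.eval S v)
  | .dd p q r => fun v => S.d (p.eval S v) (q.eval S v) (r.eval S v)

/-- A term uses only the operation `d`. -/
def STerm.onlyD {n : ℕ} : STerm n → Prop
  | .var _ => True
  | .meet _ _ => False
  | .dd p q r => p.onlyD ∧ q.onlyD ∧ r.onlyD

/-! Instantiating regularity (3) with a repeated argument turns `d(y,y,x)` and `d(x,y,y)` into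
Mal'cev evaluations `d(u,u,x ∧ y)` and `d(x ∧ y,u,u)` inside the block of `x ∧ y`, which return
`x ∧ y`. Rewriting every `p ∧ q` as `d(p,q,q)` then eliminates `∧` from any term. -/

namespace RegSMB

variable {A : Type} (S : RegSMB A)

theorem meet_eq_d_left (x y : A) : S.meet x y = S.d y y x := by
  have hsim : S.sim (S.meet y (S.meet x y)) (S.meet x y) := by
    have hassoc := S.meet_assoc_sim x y y
    rw [S.meet_idem] at hassoc
    exact S.sim_equiv.trans (S.meet_comm_sim y _) hassoc
  rw [S.reg3 y y x, S.meet_idem, S.malcev_left hsim]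

theorem meet_eq_d_right (x y : A) : S.meet x y = S.d x y y := by
  rw [S.reg3 x y y, S.meet_idem, S.reg4,
    S.malcev_right (S.sim_equiv.symm (S.meet_comm_sim x y))]

end RegSMB

theorem STerm.exists_onlyD_of_meet_eq_d {A : Type} (S : SMB A)
    (h : ∀ x y : A, S.meet x y = S.d x y y) {n : ℕ} (t : STerm n) :
    ∃ t' : STerm n, t'.onlyD ∧ ∀ v : Fin n → A, t.eval S v = t'.eval S v := by
  induction t with
  | var i => exact ⟨.var i, trivial, fun _ => rfl⟩
  | meet p q ihp ihq =>
    obtain ⟨p', hp', hp⟩ := ihp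
    obtain ⟨q', hq', hq⟩ := ihq
    exact ⟨.dd p' q' q', ⟨hp', hq', hq'⟩, fun v => by simp only [STerm.eval, hp, hq, h]⟩
  | dd p q r ihp ihq ihr =>
    obtain ⟨p', hp', hp⟩ := ihp
    obtain ⟨q', hq', hq⟩ := ihq
    obtain ⟨r', hr', hr⟩ := ihr
    exact ⟨.dd p' q' r', ⟨hp', hq', hr'⟩, fun v => by simp only [STerm.eval, hp, hq, hr]⟩

/-- every regular SMB algebra satisfies `x ∧ y = d(y,y,x) = d(x,y,y)`;
consequently, the clone of term operations is generated by `d` alone. -/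
theorem regSMB_meet_eq_d {A : Type} (S : RegSMB A) :
    (∀ x y : A, S.meet x y = S.d y y x ∧ S.meet x y = S.d x y y) ∧
    (∀ (n : ℕ) (t : STerm n), ∃ t' : STerm n, t'.onlyD ∧
      ∀ v : Fin n → A, t.eval S.toSMB v = t'.eval S.toSMB v) :=
  ⟨fun x y => ⟨S.meet_eq_d_left x y, S.meet_eq_d_right x y⟩,
    fun _ t => t.exists_onlyD_of_meet_eq_d S.toSMB S.meet_eq_d_right⟩
end

section
/- Let R be a subdirect product of finite regular SMB algebras A₁, ..., Aₙ, where min(Aᵢ) denotes the least ∼-class of Aᵢ. Then the intersection (min(A₁) × ... × min(Aₙ)) ∩ R is nonempty, and it equals min(R), the least ∼-class of R viewed as an SMB algebra. -/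
/-! Taking the meet of elements of `R` that lie in `min(Aᵢ)` at coordinate `i`, for every `i`,
gives an element of `R` lying in `min(Aᵢ)` at every coordinate, since `min(Aᵢ)` absorbs meets on
either side. That element sits below everything in `R`, so its `∼`-class, which is
`(min A₁ × ⋯ × min Aₙ) ∩ R`, is the least class of `R`. -/

namespace SMB.IsMinClass

variable {A : Type} {S : SMB A} {M : Set A}

theorem mem_iff_sim (hM : S.IsMinClass M) {a x : A} (ha : a ∈ M) : x ∈ M ↔ S.sim x a := by
  obtain ⟨m, rfl, -⟩ := hM
  exact ⟨fun hx => S.sim_equiv.trans hx (S.sim_equiv.symm ha),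
    fun hx => S.sim_equiv.trans hx ha⟩

theorem nonempty (hM : S.IsMinClass M) : M.Nonempty := by
  obtain ⟨m, rfl, -⟩ := hM
  exact ⟨m, S.sim_equiv.refl m⟩

theorem meet_mem_left (hM : S.IsMinClass M) {x : A} (hx : x ∈ M) (b : A) : S.meet x b ∈ M := by
  obtain ⟨m, rfl, hmin⟩ := hM
  exact S.sim_equiv.trans (S.sim_meet hx (S.sim_equiv.refl b)) (hmin b)

theorem meet_mem_right (hM : S.IsMinClass M) {x : A} (hx : x ∈ M) (b : A) : S.meet b x ∈ M :=
  (hM.mem_iff_sim (hM.meet_mem_left hx b)).2 (S.meet_comm_sim b x)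

end SMB.IsMinClass

theorem SubdirectSMB.exists_forall_mem_minClass {n : ℕ} (hn : 0 < n) {A : Fin n → Type}
    {S : ∀ i, SMB (A i)} {M : ∀ i, Set (A i)} (hM : ∀ i, (S i).IsMinClass (M i))
    {R : Set (∀ i, A i)} (hR : SubdirectSMB S R) : ∃ a ∈ R, ∀ i, a i ∈ M i := by
  have hreach : ∀ j, ∃ r ∈ R, r j ∈ M j := fun j => by
    obtain ⟨x, hx⟩ := (hM j).nonempty
    obtain ⟨r, hr, rfl⟩ := hR.2.2 j x
    exact ⟨r, hr, hx⟩
  suffices h : ∀ s : Finset (Fin n), ∃ a ∈ R, ∀ i ∈ s, a i ∈ M i by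
    simpa using h Finset.univ
  intro s
  induction s using Finset.induction_on with
  | empty =>
    obtain ⟨r, hr, -⟩ := hreach ⟨0, hn⟩
    exact ⟨r, hr, by simp⟩
  | insert j s _ ih =>
    obtain ⟨a, haR, ha⟩ := ih
    obtain ⟨r, hrR, hr⟩ := hreach j
    refine ⟨fun i => (S i).meet (a i) (r i), hR.1 a haR r hrR, ?_⟩
    rintro i hi
    rcases Finset.mem_insert.1 hi with rfl | hi
    · exact (hM i).meet_mem_right hr (a i)
    · exact (hM i).meet_mem_left (ha i hi) (r i)

theorem min_of_subdirect_product_general {n : ℕ} (hn : 0 < n) {A : Fin n → Type}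
    (S : ∀ i, RegSMB (A i))
    (M : ∀ i, Set (A i)) (hM : ∀ i, SMB.IsMinClass (S i).toSMB (M i))
    (R : Set (∀ i, A i)) (hR : SubdirectSMB (fun i => (S i).toSMB) R) :
    ∃ a ∈ R, (∀ i, a i ∈ M i) ∧
      ({x | x ∈ R ∧ ∀ i, x i ∈ M i} = {x | x ∈ R ∧ ∀ i, (S i).sim (x i) (a i)}) ∧
      (∀ b ∈ R, ∀ i, (S i).sim ((S i).meet (a i) (b i)) (a i)) := by
  obtain ⟨a, haR, ha⟩ := hR.exists_forall_mem_minClass hn hM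
  refine ⟨a, haR, ha, ?_, fun b _ i =>
    ((hM i).mem_iff_sim (ha i)).1 ((hM i).meet_mem_left (ha i) (b i))⟩
  ext x
  simp only [Set.mem_ofPred_eq, fun i => (hM i).mem_iff_sim (ha i)]

/-- in a subdirect product `R` of finite regular SMB algebras, the set
`(min A₁ × ⋯ × min Aₙ) ∩ R` is nonempty and equals the least `∼`-class `min R` of `R`. -/
theorem min_of_subdirect_product {n : ℕ} (hn : 0 < n) {A : Fin n → Type}
    [∀ i, Fintype (A i)] (S : ∀ i, RegSMB (A i))
    (M : ∀ i, Set (A i)) (hM : ∀ i, SMB.IsMinClass (S i).toSMB (M i))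
    (R : Set (∀ i, A i)) (hR : SubdirectSMB (fun i => (S i).toSMB) R) :
    ∃ a ∈ R, (∀ i, a i ∈ M i) ∧
      ({x | x ∈ R ∧ ∀ i, x i ∈ M i} = {x | x ∈ R ∧ ∀ i, (S i).sim (x i) (a i)}) ∧
      (∀ b ∈ R, ∀ i, (S i).sim ((S i).meet (a i) (b i)) (a i)) :=
  min_of_subdirect_product_general hn S M hM R hR
end

section
/- Let R be a subdirect product of two unital SMB algebras A and B with unit elements 1_A and 1_B respectively. Viewing R as a bipartite graph between A and B, the vertices 1_A and 1_B are connected by a path of length at most 3 in R. Specifically, either (1_A, 1_B) ∈ R, or there exist a ∈ A, b ∈ B with (1_A, b), (a, 1_B), (a, b) ∈ R. -/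
theorem units_connected_general {A B : Type} (SA : SMB A) (SB : SMB B)
    (oneA : A) (hA : ∀ x, SA.meet oneA x = x ∧ SA.meet x oneA = x)
    (oneB : B) (hB : ∀ x, SB.meet oneB x = x ∧ SB.meet x oneB = x)
    (R : Set (A × B))
    (hmeet : ∀ r ∈ R, ∀ s ∈ R, (SA.meet r.1 s.1, SB.meet r.2 s.2) ∈ R)
    (hsub1 : ∀ a : A, ∃ b : B, (a, b) ∈ R)
    (hsub2 : ∀ b : B, ∃ a : A, (a, b) ∈ R) :
    (oneA, oneB) ∈ R ∨
      ∃ (a : A) (b : B), (oneA, b) ∈ R ∧ (a, oneB) ∈ R ∧ (a, b) ∈ R := by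
  obtain ⟨b, hb⟩ := hsub1 oneA
  obtain ⟨a, ha⟩ := hsub2 oneB
  have hab : (a, b) ∈ R := by
    simpa only [(hA a).1, (hB b).2] using hmeet _ hb _ ha
  exact Or.inr ⟨a, b, hb, ha, hab⟩

/-- in a subdirect product `R ≤sd A × B` of unital SMB algebras, the
units `1_A` and `1_B` are connected by a path of length at most 3 in the bipartite
graph `R`: either `(1_A, 1_B) ∈ R`, or there are `a, b` with
`(1_A, b), (a, 1_B), (a, b) ∈ R`. -/
theorem units_connected {A B : Type} (SA : SMB A) (SB : SMB B)
    (oneA : A) (hA : ∀ x, SA.meet oneA x = x ∧ SA.meet x oneA = x)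
    (oneB : B) (hB : ∀ x, SB.meet oneB x = x ∧ SB.meet x oneB = x)
    (R : Set (A × B))
    (hmeet : ∀ r ∈ R, ∀ s ∈ R, (SA.meet r.1 s.1, SB.meet r.2 s.2) ∈ R)
    (hd : ∀ r ∈ R, ∀ s ∈ R, ∀ u ∈ R, (SA.d r.1 s.1 u.1, SB.d r.2 s.2 u.2) ∈ R)
    (hsub1 : ∀ a : A, ∃ b : B, (a, b) ∈ R)
    (hsub2 : ∀ b : B, ∃ a : A, (a, b) ∈ R) :
    (oneA, oneB) ∈ R ∨
      ∃ (a : A) (b : B), (oneA, b) ∈ R ∧ (a, oneB) ∈ R ∧ (a, b) ∈ R :=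
  units_connected_general SA SB oneA hA oneB hB R hmeet hsub1 hsub2
end

section
/- Let P = (V, D, C) be a multisorted CSP instance over a template T, and let t be a binary term satisfying t(x, t(x,y)) = t(x,y) in all algebras of T. If P has a solution f, then the decomposition instance t(P) has a solution, namely g((i,a)) := t(a, f(i)). -/
/-- Terms over a signature `σ` (σ k = symbols of arity k) in `n` variables. -/
inductive Term (σ : ℕ → Type) (n : ℕ) : Type
  | var : Fin n → Term σ n
  | app : {k : ℕ} → σ k → (Fin k → Term σ n) → Term σ n

/-- An algebra over the signature `σ`. -/
structure Alg (σ : ℕ → Type) where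
  carrier : Type
  interp : {k : ℕ} → σ k → (Fin k → carrier) → carrier

def Term.eval {σ : ℕ → Type} {n : ℕ} (A : Alg σ) : Term σ n → (Fin n → A.carrier) → A.carrier
  | .var i, v => v i
  | .app f ts, v => A.interp f (fun j => (ts j).eval A v)

/-- Unary polynomial operations of `A`. -/
def IsPol1 {σ : ℕ → Type} (A : Alg σ) (p : A.carrier → A.carrier) : Prop :=
  ∃ (k : ℕ) (t : Term σ (k + 1)) (c : Fin k → A.carrier),
    ∀ x, p x = t.eval A (Fin.cons x c)

/-- `n`-ary polynomial operations of `A`. -/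
def IsPolN {σ : ℕ → Type} (A : Alg σ) (n : ℕ) (p : (Fin n → A.carrier) → A.carrier) : Prop :=
  ∃ (k : ℕ) (t : Term σ (n + k)) (c : Fin k → A.carrier),
    ∀ v, p v = t.eval A (Fin.append v c)

/-- A weak near-unanimity term. -/
def IsWNU {σ : ℕ → Type} (A : Alg σ) {n : ℕ} (w : Term σ (n + 1)) : Prop :=
  (∀ x, w.eval A (fun _ => x) = x) ∧
  ∀ x y (j j' : Fin (n + 1)),
    w.eval A (Function.update (fun _ => x) j y) = w.eval A (Function.update (fun _ => x) j' y)

/-- A special wnu term: additionally `x ∘ (x ∘ y) = x ∘ y` where `x ∘ y := w(x,…,x,y)`. -/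
def IsSpecialWNU {σ : ℕ → Type} (A : Alg σ) {n : ℕ} (w : Term σ (n + 1)) : Prop :=
  IsWNU A w ∧
  ∀ x y,
    w.eval A (Function.update (fun _ => x) (Fin.last n)
      (w.eval A (Function.update (fun _ => x) (Fin.last n) y))) =
      w.eval A (Function.update (fun _ => x) (Fin.last n) y)

def IsIdemAlg {σ : ℕ → Type} (A : Alg σ) : Prop :=
  ∀ (k : ℕ) (f : σ k) (x : A.carrier), A.interp f (fun _ => x) = x

/-- Congruences of `A`. -/
def IsCongA {σ : ℕ → Type} (A : Alg σ) (θ : A.carrier → A.carrier → Prop) : Prop :=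
  Equivalence θ ∧
  ∀ (k : ℕ) (f : σ k) (u v : Fin k → A.carrier),
    (∀ j, θ (u j) (v j)) → θ (A.interp f u) (A.interp f v)

def CongLE' {A : Type} (α β : A → A → Prop) : Prop := ∀ a b, α a b → β a b

/-- `α ≺ β`: a covering pair of congruences of `A`. -/
def IsCoverA {σ : ℕ → Type} (A : Alg σ) (α β : A.carrier → A.carrier → Prop) : Prop :=
  IsCongA A α ∧ IsCongA A β ∧ CongLE' α β ∧ ¬ CongLE' β α ∧
  ∀ γ, IsCongA A γ → CongLE' α γ → CongLE' γ β → (CongLE' γ α ∨ CongLE' β γ)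

/-- `(α,β)` can be separated from `(γ,δ)` (within one algebra). -/
def CanSep {σ : ℕ → Type} (A : Alg σ) (α β γ δ : A.carrier → A.carrier → Prop) : Prop :=
  ∃ f, IsPol1 A f ∧ ¬ MapsC f β α ∧ MapsC f δ γ

/-- `(α,β)`-minimal sets. -/
def IsMinSetA {σ : ℕ → Type} (A : Alg σ) (α β : A.carrier → A.carrier → Prop)
    (U : Set A.carrier) : Prop :=
  ∃ f, IsPol1 A f ∧ Set.range f = U ∧ ¬ MapsC f β α ∧
    ∀ g, IsPol1 A g → ¬ MapsC g β α → Set.range g ⊆ U → Set.range g = U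

/-- The retract algebra `p(A)` of `A` by the retraction `p`. -/
def retractAlg {σ : ℕ → Type} (A : Alg σ) (p : A.carrier → A.carrier)
    (hp : ∀ x, p (p x) = p x) : Alg σ where
  carrier := {a : A.carrier // p a = a}
  interp := fun f v => ⟨p (A.interp f (fun i => (v i).1)), hp _⟩

/-- Multisorted CSP constraints. -/
structure Constraint (V : Type) (A : V → Type) where
  scope : Set V
  rel : Set ((i : scope) → A i.1)

/-- `f` is a solution of the instance with constraint set `C`. -/
def IsSol {V : Type} {A : V → Type} (C : Set (Constraint V A)) (f : ∀ i, A i) : Prop :=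
  ∀ c ∈ C, (fun i : c.scope => f i.1) ∈ c.rel

/-- Evaluation of the binary term `t`: `tEv A t i a x = t(a, x)` in the algebra `A i`. -/
def tEv {σ : ℕ → Type} {V : Type} (A : V → Alg σ) (t : Term σ 2) (i : V)
    (a x : (A i).carrier) : (A i).carrier :=
  t.eval (A i) ![a, x]

/-- Membership in the subalgebra `Tᵢ` of `∏_{a ∈ Aᵢ} t_a(Aᵢ)` generated by the
tuples `⟨t(a,b) : a ∈ Aᵢ⟩`, `b ∈ Aᵢ` (tuples viewed as maps `Aᵢ → Aᵢ`; the operations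
of the retract factor `t_a(Aᵢ)` are `x̄ ↦ t(a, f(x̄))`). -/
inductive TClos {σ : ℕ → Type} {V : Type} (A : V → Alg σ) (t : Term σ 2) (i : V) :
    ((A i).carrier → (A i).carrier) → Prop
  | gen (b : (A i).carrier) : TClos A t i (fun a => tEv A t i a b)
  | app {k : ℕ} (f : σ k) (args : Fin k → ((A i).carrier → (A i).carrier))
      (h : ∀ j, TClos A t i (args j)) :
      TClos A t i (fun a => tEv A t i a ((A i).interp f (fun j => args j a)))

theorem decomposition_has_solution_general {σ : ℕ → Type} {V : Type} (A : V → Alg σ)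
    (t : Term σ 2)
    (C : Set (Constraint V (fun i => (A i).carrier)))
    (f : ∀ i, (A i).carrier) (hf : IsSol C f) :
    ∃ g : ∀ (i : V), (A i).carrier → (A i).carrier,
      (∀ i a, g i a = tEv A t i a (f i)) ∧
      (∀ i a, g i a ∈ Set.range (tEv A t i a)) ∧
      (∀ c ∈ C, ∀ r ∈ c.rel, ∃ x ∈ c.rel,
        ∀ i : c.scope, g i.1 (r i) = tEv A t i.1 (r i) (x i)) ∧
      (∀ i, TClos A t i (g i)) := by
  refine ⟨fun i a => tEv A t i a (f i), fun _ _ => rfl, fun i _ => ⟨f i, rfl⟩, ?_,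
    fun i => TClos.gen (f i)⟩
  intro c hc _ _
  exact ⟨fun i => f i.1, hf c hc, fun _ => rfl⟩

/-- if `P` has a solution `f`, then the decomposition `t(P)` has a
solution, namely `g (i, a) := t(a, f i)`: each value lies in the domain
`A_{i,a} = t_a(Aᵢ)`, the restriction of `g` to each scope `S_r` lies in `R_r`,
and the restriction of `g` to each scope `Sᵢ` lies in `Tᵢ`. -/
theorem decomposition_has_solution {σ : ℕ → Type} {V : Type} (A : V → Alg σ)
    (t : Term σ 2)
    (hid : ∀ (i : V) (x y : (A i).carrier), tEv A t i x (tEv A t i x y) = tEv A t i x y)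
    (C : Set (Constraint V (fun i => (A i).carrier)))
    (f : ∀ i, (A i).carrier) (hf : IsSol C f) :
    ∃ g : ∀ (i : V), (A i).carrier → (A i).carrier,
      (∀ i a, g i a = tEv A t i a (f i)) ∧
      (∀ i a, g i a ∈ Set.range (tEv A t i a)) ∧
      (∀ c ∈ C, ∀ r ∈ c.rel, ∃ x ∈ c.rel,
        ∀ i : c.scope, g i.1 (r i) = tEv A t i.1 (r i) (x i)) ∧
      (∀ i, TClos A t i (g i)) :=
  decomposition_has_solution_general A t C f hf
end

section
/- Let P = (V, D, C) be a (1,1)-minimal multisorted CSP instance with connected scope graph Γ_V. Then P has a link partition if and only if the microstructure graph Γ_P is disconnected. -/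
/-- Adjacency in the scope (hyper)graph `Γ_V`. -/
def scopeAdj {V : Type} {A : V → Type} (C : Set (Constraint V A)) (i j : V) : Prop :=
  ∃ c ∈ C, i ∈ c.scope ∧ j ∈ c.scope

/-- Adjacency in the microstructure (hyper)graph `Γ_P`. -/
def microAdj {V : Type} {A : V → Type} (C : Set (Constraint V A))
    (u v : Σ i, A i) : Prop :=
  ∃ c ∈ C, ∃ r ∈ c.rel,
    (∃ hu : u.1 ∈ c.scope, r ⟨u.1, hu⟩ = u.2) ∧ (∃ hv : v.1 ∈ c.scope, r ⟨v.1, hv⟩ = v.2)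

/-- A link partition: equivalence relations (encoded by surjective colourings
`part i : A i → Fin k`) with the same number `k ≥ 2` of classes on every domain,
such that every constraint relation decomposes along the classes. -/
def LinkPartition {V : Type} {A : V → Type} (C : Set (Constraint V A)) : Prop :=
  ∃ k : ℕ, 2 ≤ k ∧ ∃ part : ∀ i, A i → Fin k,
    (∀ (i : V) (j : Fin k), ∃ a, part i a = j) ∧
    (∀ c ∈ C, ∀ r ∈ c.rel, ∀ u v : c.scope, part u.1 (r u) = part v.1 (r v))

/-! The connected components of the microstructure graph are the classes of `Quot (microAdj C)`.
A link partition is the same thing as a colouring that is constant on components, has at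
least two colours and takes every colour on every domain. Conversely, (1,1)-minimality lets
every walk in the scope graph be lifted to the microstructure graph from any starting value,
so, the scope graph being connected, every component meets every domain; colouring by
components is then a link partition as soon as there are at least two of them. -/

open Relation

section Microstructure

variable {V : Type} {A : V → Type} {C : Set (Constraint V A)}

instance microAdj_symm : Std.Symm (microAdj C) :=
  ⟨fun _ _ ⟨c, hc, r, hr, hu, hv⟩ => ⟨c, hc, r, hr, hv, hu⟩⟩

theorem forall_reflTransGen_microAdj_iff_subsingleton :
    (∀ u v : Σ i, A i, ReflTransGen (microAdj C) u v) ↔ Subsingleton (Quot (microAdj C)) := by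
  simp only [← EqvGen.eqvGen_eq_reflTransGen, ← Quot.eq]
  exact ⟨fun h => ⟨Quot.ind fun u => Quot.ind fun v => h u v⟩, fun _ _ _ => Subsingleton.elim _ _⟩

theorem LinkPartition.nontrivial_quot_microAdj [Nonempty V] (h : LinkPartition C) :
    Nontrivial (Quot (microAdj C)) := by
  obtain ⟨k, hk, part, hsurj, hdec⟩ := h
  let colour : Quot (microAdj C) → Fin k := Quot.lift (fun u => part u.1 u.2) <| by
    rintro ⟨i, a⟩ ⟨j, b⟩ ⟨c, hc, r, hr, ⟨hi, hra⟩, ⟨hj, hrb⟩⟩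
    exact hra ▸ hrb ▸ hdec c hc r hr ⟨i, hi⟩ ⟨j, hj⟩
  have : Nontrivial (Fin k) := Fin.nontrivial_iff_two_le.mpr hk
  obtain ⟨i⟩ := ‹Nonempty V›
  refine Function.Surjective.nontrivial (f := colour) fun j => ?_
  obtain ⟨a, ha⟩ := hsurj i j
  exact ⟨Quot.mk _ ⟨i, a⟩, ha⟩

theorem linkPartition_of_surjective_on_fibres {Q : Type} [Finite Q] [Nontrivial Q]
    (p : (Σ i, A i) → Q) (hsurj : ∀ i, Function.Surjective fun a : A i => p ⟨i, a⟩)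
    (hconst : ∀ u v, microAdj C u v → p u = p v) : LinkPartition C := by
  let e := Finite.equivFin Q
  refine ⟨Nat.card Q, Finite.one_lt_card, fun i a => e (p ⟨i, a⟩), fun i j => ?_, ?_⟩
  · obtain ⟨a, ha⟩ := hsurj i (e.symm j)
    exact ⟨a, by simp only [ha, Equiv.apply_symm_apply]⟩
  · intro c hc r hr u v
    exact congrArg e (hconst _ _ ⟨c, hc, r, hr, ⟨u.2, rfl⟩, ⟨v.2, rfl⟩⟩)

variable (hmin : ∀ c ∈ C, ∀ (u : c.scope) (a : A u.1), ∃ r ∈ c.rel, r u = a)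
include hmin

theorem exists_microAdj_of_scopeAdj {i j : V} (h : scopeAdj C i j) (a : A i) :
    ∃ b : A j, microAdj C ⟨i, a⟩ ⟨j, b⟩ := by
  obtain ⟨c, hc, hi, hj⟩ := h
  obtain ⟨r, hr, hra⟩ := hmin c hc ⟨i, hi⟩ a
  exact ⟨r ⟨j, hj⟩, c, hc, r, hr, ⟨hi, hra⟩, ⟨hj, rfl⟩⟩

theorem exists_reflTransGen_microAdj_of_scope {i j : V} (h : ReflTransGen (scopeAdj C) i j)
    (a : A i) : ∃ b : A j, ReflTransGen (microAdj C) ⟨i, a⟩ ⟨j, b⟩ := by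
  induction h with
  | refl => exact ⟨a, .refl⟩
  | tail _ hstep ih =>
    obtain ⟨b, hb⟩ := ih
    obtain ⟨b', hb'⟩ := exists_microAdj_of_scopeAdj hmin hstep b
    exact ⟨b', hb.tail hb'⟩

theorem quot_mk_microAdj_surjective_on_fibre
    (hscope : ∀ i j : V, ReflTransGen (scopeAdj C) i j) (i : V) :
    Function.Surjective fun a : A i => Quot.mk (microAdj C) ⟨i, a⟩ := by
  rintro ⟨⟨j, b⟩⟩
  obtain ⟨a, hba⟩ := exists_reflTransGen_microAdj_of_scope hmin (hscope j i) b
  exact ⟨a, (Quot.eqvGen_sound (EqvGen.reflTransGen_le_eqvGen _ _ _ hba)).symm⟩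

end Microstructure

theorem link_partition_iff_micro_disconnected_general {V : Type} {A : V → Type}
    [Nonempty V] [∀ i, Fintype (A i)]
    (C : Set (Constraint V A))
    (hmin : ∀ c ∈ C, ∀ (u : c.scope) (a : A u.1), ∃ r ∈ c.rel, r u = a)
    (hscope : ∀ i j : V, Relation.ReflTransGen (scopeAdj C) i j) :
    LinkPartition C ↔ ¬ (∀ u v : Σ i, A i, Relation.ReflTransGen (microAdj C) u v) := by
  rw [forall_reflTransGen_microAdj_iff_subsingleton, not_subsingleton_iff_nontrivial]
  refine ⟨LinkPartition.nontrivial_quot_microAdj, fun _ => ?_⟩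
  have hsurj := quot_mk_microAdj_surjective_on_fibre hmin hscope
  obtain ⟨i⟩ := ‹Nonempty V›
  have : Finite (Quot (microAdj C)) := Finite.of_surjective _ (hsurj i)
  exact linkPartition_of_surjective_on_fibres _ hsurj fun _ _ => Quot.sound

/-- a (1,1)-minimal instance with connected scope graph has a link
partition iff its microstructure graph is disconnected. -/
theorem link_partition_iff_micro_disconnected {V : Type} {A : V → Type}
    [Nonempty V] [∀ i, Nonempty (A i)] [∀ i, Fintype (A i)]
    (C : Set (Constraint V A))
    (hvar : ∀ i : V, ∃ c ∈ C, i ∈ c.scope)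
    (hmin : ∀ c ∈ C, ∀ (u : c.scope) (a : A u.1), ∃ r ∈ c.rel, r u = a)
    (hscope : ∀ i j : V, Relation.ReflTransGen (scopeAdj C) i j) :
    LinkPartition C ↔ ¬ (∀ u v : Σ i, A i, Relation.ReflTransGen (microAdj C) u v) :=
  link_partition_iff_micro_disconnected_general C hmin hscope
end

section
/- Let α ≺ β and γ ≺ δ be two covering pairs in the congruence lattice of a finite algebra A such that neither (α,β) can be separated from (γ,δ) nor (γ,δ) from (α,β). Then for any subset U ⊆ A: U is an (α,β)-minimal set if and only if U is a (γ,δ)-minimal set. -/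
section MinimalSets

variable {σ : ℕ → Type} {A : Alg σ} {α β γ δ : A.carrier → A.carrier → Prop}

theorem isMinSetA_iff_of_mapsC_iff
    (h : ∀ f, IsPol1 A f → (MapsC f β α ↔ MapsC f δ γ)) (U : Set A.carrier) :
    IsMinSetA A α β U ↔ IsMinSetA A γ δ U := by
  unfold IsMinSetA
  refine exists_congr fun f => and_congr_right fun hf => ?_
  rw [h f hf]
  refine and_congr_right fun _ => and_congr_right fun _ =>
    forall_congr' fun g => forall_congr' fun hg => ?_
  rw [h g hg]

theorem mapsC_iff_of_not_canSep (hsep1 : ¬ CanSep A α β γ δ) (hsep2 : ¬ CanSep A γ δ α β)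
    {f : A.carrier → A.carrier} (hf : IsPol1 A f) :
    MapsC f β α ↔ MapsC f δ γ :=
  ⟨fun hβα => by_contra fun hδγ => hsep2 ⟨f, hf, hδγ, hβα⟩,
    fun hδγ => by_contra fun hβα => hsep1 ⟨f, hf, hβα, hδγ⟩⟩

end MinimalSets

theorem minimal_sets_coincide_general {σ : ℕ → Type} (A : Alg σ)
    (α β γ δ : A.carrier → A.carrier → Prop)
    (hsep1 : ¬ CanSep A α β γ δ) (hsep2 : ¬ CanSep A γ δ α β) :
    ∀ U : Set A.carrier, IsMinSetA A α β U ↔ IsMinSetA A γ δ U :=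
  isMinSetA_iff_of_mapsC_iff fun _ hf => mapsC_iff_of_not_canSep hsep1 hsep2 hf

/-- if neither of two covering pairs can be separated from the other,
they have the same minimal sets. -/
theorem minimal_sets_coincide {σ : ℕ → Type} (A : Alg σ) [Fintype A.carrier]
    (α β γ δ : A.carrier → A.carrier → Prop)
    (hαβ : IsCoverA A α β) (hγδ : IsCoverA A γ δ)
    (hsep1 : ¬ CanSep A α β γ δ) (hsep2 : ¬ CanSep A γ δ α β) :
    ∀ U : Set A.carrier, IsMinSetA A α β U ↔ IsMinSetA A γ δ U :=
  minimal_sets_coincide_general A α β γ δ hsep1 hsep2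
end

section
/- Let R be a subdirect product of algebras A₁, ..., Aₙ, and let α ≺ β and γ ≺ δ both be covering pairs in Con(Aᵢ) for the same index i. Then (α,β) can be separated from (γ,δ) within Aᵢ (i.e., there is f ∈ Pol₁(Aᵢ) with f(β) ⊄ α and f(δ) ⊆ γ) if and only if (α,β) can be separated from (γ,δ) with respect to R (i.e., there is g ∈ Pol₁(R) with gᵢ(β) ⊄ α and gᵢ(δ) ⊆ γ, where gᵢ denotes the i-th coordinate polynomial of g). -/
theorem IsPol1.exists_coord_eq {σ : ℕ → Type} {n : ℕ} {A : Fin n → Alg σ}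
    {R : Set (∀ i, (A i).carrier)} {i : Fin n} (hsurj : ∀ x : (A i).carrier, ∃ r ∈ R, r i = x)
    {f : (A i).carrier → (A i).carrier} (hf : IsPol1 (A i) f) :
    ∃ (k : ℕ) (t : Term σ (k + 1)) (c : Fin k → ∀ l, (A l).carrier),
      (∀ j, c j ∈ R) ∧ (fun x => t.eval (A i) (Fin.cons x (fun j => c j i))) = f := by
  obtain ⟨k, t, c, hft⟩ := hf
  choose r hrR hri using fun j => hsurj (c j)
  refine ⟨k, t, r, hrR, funext fun x => ?_⟩
  simp only [hri, hft]

theorem separation_iff_separation_wrt_subdirect_general {σ : ℕ → Type} {n : ℕ}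
    (A : Fin n → Alg σ) (R : Set (∀ i, (A i).carrier))
    (hsubdir : ∀ (i : Fin n) (x : (A i).carrier), ∃ r ∈ R, r i = x)
    (i : Fin n) (α β γ δ : (A i).carrier → (A i).carrier → Prop) :
    (∃ f, IsPol1 (A i) f ∧ ¬ MapsC f β α ∧ MapsC f δ γ) ↔
    (∃ (k : ℕ) (t : Term σ (k + 1)) (c : Fin k → ∀ l, (A l).carrier),
      (∀ j, c j ∈ R) ∧
      ¬ MapsC (fun x => t.eval (A i) (Fin.cons x (fun j => c j i))) β α ∧
      MapsC (fun x => t.eval (A i) (Fin.cons x (fun j => c j i))) δ γ) := by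
  constructor
  · rintro ⟨f, hf, hβα, hδγ⟩
    obtain ⟨k, t, c, hcR, rfl⟩ := hf.exists_coord_eq (hsubdir i)
    exact ⟨k, t, c, hcR, hβα, hδγ⟩
  · rintro ⟨k, t, c, -, hβα, hδγ⟩
    exact ⟨_, ⟨k, t, fun j => c j i, fun _ => rfl⟩, hβα, hδγ⟩

/-- for covering pairs on the same factor `Aᵢ` of a subdirect product `R`,
separation within `Aᵢ` is equivalent to separation with respect to `R`. -/
theorem separation_iff_separation_wrt_subdirect {σ : ℕ → Type} {n : ℕ}
    (A : Fin n → Alg σ) (R : Set (∀ i, (A i).carrier))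
    (hclosed : ∀ (k : ℕ) (f : σ k) (v : Fin k → ∀ i, (A i).carrier),
      (∀ j, v j ∈ R) → (fun i => (A i).interp f (fun j => v j i)) ∈ R)
    (hsubdir : ∀ (i : Fin n) (x : (A i).carrier), ∃ r ∈ R, r i = x)
    (i : Fin n) (α β γ δ : (A i).carrier → (A i).carrier → Prop)
    (hαβ : IsCoverA (A i) α β) (hγδ : IsCoverA (A i) γ δ) :
    (∃ f, IsPol1 (A i) f ∧ ¬ MapsC f β α ∧ MapsC f δ γ) ↔
    (∃ (k : ℕ) (t : Term σ (k + 1)) (c : Fin k → ∀ l, (A l).carrier),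
      (∀ j, c j ∈ R) ∧
      ¬ MapsC (fun x => t.eval (A i) (Fin.cons x (fun j => c j i))) β α ∧
      MapsC (fun x => t.eval (A i) (Fin.cons x (fun j => c j i))) δ γ) :=
  separation_iff_separation_wrt_subdirect_general A R hsubdir i α β γ δ
end

section
/- Let A be a finite algebra with a Mal'cev term d, and let α ≺ β in Con(A). Fix (a,b) ∈ β \ α, fix f ∈ Pol₁(A) with f(A) an (α,β)-minimal set and (f(a), f(b)) ∈ β \ α, and define β' := { (p(a₁,...,aₙ), p(b₁,...,bₙ)) : n ∈ ℕ, p ∈ Polₙ(A), and for each i either (aᵢ,bᵢ) ∈ α or (aᵢ,bᵢ) = (f(a),f(b)) }. Then β' is a congruence of A, and hence β' = β. -/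
/-- The relation `β'` generated by `α` together with the single pair `(fa, fb)`,
via polynomial operations. -/
def betaPrime {σ : ℕ → Type} (A : Alg σ) (α : A.carrier → A.carrier → Prop)
    (fa fb : A.carrier) : A.carrier → A.carrier → Prop := fun x y =>
  ∃ (m : ℕ) (p : (Fin m → A.carrier) → A.carrier), IsPolN A m p ∧
    ∃ u v : Fin m → A.carrier,
      (∀ i, α (u i) (v i) ∨ (u i = fa ∧ v i = fb)) ∧ p u = x ∧ p v = y

/-!
`β'` is reflexive and closed under all polynomial operations (run the witnessing polynomials on
disjoint blocks of variables). A reflexive relation compatible with a Mal'cev operation `d` is an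
equivalence: `x β' y` gives `y = d(x,x,y) β' d(x,y,y) = x`, and `x β' y β' z` gives
`x = d(x,y,y) β' d(y,y,z) = z`. So `β'` is a congruence with `α ⊆ β' ⊆ β` containing
`(f a, f b) ∉ α`, and `α ≺ β` forces `β' = β`.
-/

namespace Term

variable {σ : ℕ → Type}

def subst {n m : ℕ} : Term σ n → (Fin n → Term σ m) → Term σ m
  | .var i, g => g i
  | .app f ts, g => .app f (fun j => (ts j).subst g)

def rename {n m : ℕ} (t : Term σ n) (e : Fin n → Fin m) : Term σ m :=
  t.subst (fun i => .var (e i))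

variable (A : Alg σ)

theorem eval_subst {n m : ℕ} (t : Term σ n) (g : Fin n → Term σ m) (v : Fin m → A.carrier) :
    (t.subst g).eval A v = t.eval A (fun i => (g i).eval A v) := by
  induction t with
  | var i => rfl
  | app f ts ih => exact congrArg (A.interp f) (funext ih)

theorem eval_rename {n m : ℕ} (t : Term σ n) (e : Fin n → Fin m) (v : Fin m → A.carrier) :
    (t.rename e).eval A v = t.eval A (v ∘ e) :=
  eval_subst A t _ v

theorem eval_respects {θ : A.carrier → A.carrier → Prop} (hθ : IsCongA A θ) {n : ℕ}
    (t : Term σ n) {v w : Fin n → A.carrier} (h : ∀ i, θ (v i) (w i)) :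
    θ (t.eval A v) (t.eval A w) := by
  induction t with
  | var i => exact h i
  | app f ts ih => exact hθ.2 _ f _ _ ih

end Term

def tupleConcat {X : Type*} {k : ℕ} {m : Fin k → ℕ} (u : (i : Fin k) → Fin (m i) → X) :
    Fin (∑ i, m i) → X :=
  Sigma.uncurry u ∘ finSigmaFinEquiv.symm

@[simp]
theorem tupleConcat_finSigmaFinEquiv {X : Type*} {k : ℕ} {m : Fin k → ℕ}
    (u : (i : Fin k) → Fin (m i) → X) (i : Fin k) (r : Fin (m i)) :
    tupleConcat u (finSigmaFinEquiv ⟨i, r⟩) = u i r := by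
  rw [tupleConcat, Function.comp_apply, Equiv.symm_apply_apply]
  rfl

section IsPolN

variable {σ : ℕ → Type} {A : Alg σ}

theorem isPolN_eval {n : ℕ} (t : Term σ n) : IsPolN A n (t.eval A) :=
  ⟨0, t.rename (Fin.castAdd 0), Fin.elim0, fun v => by
    rw [Term.eval_rename]; congr 1; ext i; simp⟩

theorem isPolN_apply {n : ℕ} (i : Fin n) : IsPolN A n (fun v => v i) :=
  isPolN_eval (.var i)

theorem isPolN_interp {k : ℕ} (f : σ k) : IsPolN A k (A.interp f) :=
  isPolN_eval (.app f .var)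

theorem isPolN_const {n : ℕ} (c : A.carrier) : IsPolN A n (fun _ => c) :=
  ⟨1, .var (Fin.natAdd n 0), fun _ => c, fun v => by simp [Term.eval]⟩

theorem IsPolN.exists_common_consts {n j : ℕ} {q : Fin j → (Fin n → A.carrier) → A.carrier}
    (hq : ∀ i, IsPolN A n (q i)) :
    ∃ (k : ℕ) (c : Fin k → A.carrier) (t : Fin j → Term σ (n + k)),
      ∀ i v, q i v = (t i).eval A (Fin.append v c) := by
  choose k t c ht using hq
  refine ⟨_, tupleConcat c, fun i => (t i).rename
    (Fin.addCases (Fin.castAdd _) (fun r => Fin.natAdd n (finSigmaFinEquiv ⟨i, r⟩))), ?_⟩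
  intro i v
  rw [ht, Term.eval_rename]
  congr 1
  ext l
  refine Fin.addCases (fun r => ?_) (fun r => ?_) l <;> simp

theorem IsPolN.term_comp {n j : ℕ} (t : Term σ j) {q : Fin j → (Fin n → A.carrier) → A.carrier}
    (hq : ∀ i, IsPolN A n (q i)) : IsPolN A n (fun v => t.eval A (fun i => q i v)) := by
  obtain ⟨k, c, ts, hts⟩ := IsPolN.exists_common_consts hq
  exact ⟨k, t.subst ts, c, fun v => by simp only [Term.eval_subst, hts]⟩

theorem IsPolN.comp {n j : ℕ} {P : (Fin j → A.carrier) → A.carrier} (hP : IsPolN A j P)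
    {q : Fin j → (Fin n → A.carrier) → A.carrier} (hq : ∀ i, IsPolN A n (q i)) :
    IsPolN A n (fun v => P (fun i => q i v)) := by
  obtain ⟨k, t, c, ht⟩ := hP
  have hq' : ∀ i, IsPolN A n (Fin.append q (fun l _ => c l) i) := fun i =>
    Fin.addCases (fun i => by simpa using hq i) (fun l => by simpa using isPolN_const (c l)) i
  convert IsPolN.term_comp t hq' using 2 with v
  rw [ht]
  congr 1
  ext i
  refine Fin.addCases (fun r => ?_) (fun r => ?_) i <;> simp

theorem IsPolN.respects {θ : A.carrier → A.carrier → Prop} (hθ : IsCongA A θ) {n : ℕ}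
    {P : (Fin n → A.carrier) → A.carrier} (hP : IsPolN A n P) {v w : Fin n → A.carrier}
    (h : ∀ i, θ (v i) (w i)) : θ (P v) (P w) := by
  obtain ⟨k, t, c, ht⟩ := hP
  rw [ht, ht]
  refine Term.eval_respects A hθ t fun i => Fin.addCases (fun r => ?_) (fun r => ?_) i
  · simpa using h r
  · simpa using hθ.1.refl _

end IsPolN

theorem equivalence_of_refl_of_malcev {X : Type*} {R : X → X → Prop} (d : X → X → X → X)
    (hd : ∀ x y, d x x y = y ∧ d y x x = y) (hrefl : ∀ x, R x x)
    (hcomp : ∀ {x x' y y' z z'}, R x x' → R y y' → R z z' → R (d x y z) (d x' y' z')) :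
    Equivalence R where
  refl := hrefl
  symm {x y} hxy := by
    simpa only [(hd x y).1, (hd y x).2] using hcomp (hrefl x) hxy (hrefl y)
  trans {x y z} hxy hyz := by
    simpa only [(hd y x).2, (hd y z).1] using hcomp hxy (hrefl y) hyz

section PolCompatible

variable {σ : ℕ → Type} {A : Alg σ}

def PolCompatible (A : Alg σ) (R : A.carrier → A.carrier → Prop) : Prop :=
  ∀ {n : ℕ} {P : (Fin n → A.carrier) → A.carrier}, IsPolN A n P →
    ∀ {v w : Fin n → A.carrier}, (∀ i, R (v i) (w i)) → R (P v) (P w)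

theorem PolCompatible.isCongA_of_malcev {R : A.carrier → A.carrier → Prop}
    (hR : PolCompatible A R) (hrefl : ∀ x, R x x) (d : Term σ 3)
    (hd : ∀ x y : A.carrier, d.eval A ![x, x, y] = y ∧ d.eval A ![y, x, x] = y) :
    IsCongA A R := by
  refine ⟨equivalence_of_refl_of_malcev (fun x y z => d.eval A ![x, y, z]) hd hrefl ?_,
    fun _ f _ _ => hR (isPolN_interp f)⟩
  intro _ _ _ _ _ _ hx hy hz
  exact hR (isPolN_eval d) fun i => by fin_cases i <;> assumption

end PolCompatible

section BetaPrime

variable {σ : ℕ → Type} {A : Alg σ} {α : A.carrier → A.carrier → Prop} {fa fb : A.carrier}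

theorem betaPrime_of_rel_or_eq {x y : A.carrier} (h : α x y ∨ (x = fa ∧ y = fb)) :
    betaPrime A α fa fb x y :=
  ⟨1, fun v => v 0, isPolN_apply 0, fun _ => x, fun _ => y, fun _ => h, rfl, rfl⟩

theorem polCompatible_betaPrime : PolCompatible A (betaPrime A α fa fb) := by
  intro n P hP v w hvw
  choose m p hp u v huv hpu hpv using hvw
  refine ⟨_, fun w => P fun i => p i fun r => w (finSigmaFinEquiv ⟨i, r⟩),
    hP.comp fun i => (hp i).comp fun r => isPolN_apply _, tupleConcat u, tupleConcat v, ?_, ?_, ?_⟩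
  · intro l
    obtain ⟨⟨i, r⟩, rfl⟩ := finSigmaFinEquiv.surjective l
    simpa using huv i r
  · simp [hpu]
  · simp [hpv]

theorem betaPrime_le {θ : A.carrier → A.carrier → Prop} (hθ : IsCongA A θ) (hαθ : CongLE' α θ)
    (hθab : θ fa fb) : CongLE' (betaPrime A α fa fb) θ := by
  rintro _ _ ⟨m, p, hp, u, v, huv, rfl, rfl⟩
  refine hp.respects hθ fun i => ?_
  rcases huv i with h | ⟨hu, hv⟩
  · exact hαθ _ _ h
  · rwa [hu, hv]

end BetaPrime

theorem betaPrime_is_congruence_and_eq_general {σ : ℕ → Type} (A : Alg σ)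
    (dT : Term σ 3)
    (hd : ∀ x y : A.carrier, dT.eval A ![x, x, y] = y ∧ dT.eval A ![y, x, x] = y)
    (α β : A.carrier → A.carrier → Prop) (hcov : IsCoverA A α β)
    (a b : A.carrier)
    (f : A.carrier → A.carrier)
    (hfab : β (f a) (f b) ∧ ¬ α (f a) (f b)) :
    IsCongA A (betaPrime A α (f a) (f b)) ∧
      (∀ x y, betaPrime A α (f a) (f b) x y ↔ β x y) := by
  obtain ⟨hα, hβ, hαβ, -, hcover⟩ := hcov
  have hcong : IsCongA A (betaPrime A α (f a) (f b)) :=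
    polCompatible_betaPrime.isCongA_of_malcev
      (fun x => betaPrime_of_rel_or_eq (.inl (hα.1.refl x))) dT hd
  have hle := betaPrime_le hβ hαβ hfab.1
  have hge : CongLE' β (betaPrime A α (f a) (f b)) :=
    (hcover _ hcong (fun _ _ h => betaPrime_of_rel_or_eq (.inl h)) hle).resolve_left
      fun h => hfab.2 (h _ _ (betaPrime_of_rel_or_eq (.inr ⟨rfl, rfl⟩)))
  exact ⟨hcong, fun x y => ⟨hle x y, hge x y⟩⟩

/-- in a finite Mal'cev algebra, for a covering pair `α ≺ β`,
the relation `β'` is a congruence and equals `β`. -/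
theorem betaPrime_is_congruence_and_eq {σ : ℕ → Type} (A : Alg σ) [Fintype A.carrier]
    (dT : Term σ 3)
    (hd : ∀ x y : A.carrier, dT.eval A ![x, x, y] = y ∧ dT.eval A ![y, x, x] = y)
    (α β : A.carrier → A.carrier → Prop) (hcov : IsCoverA A α β)
    (a b : A.carrier) (hab : β a b ∧ ¬ α a b)
    (f : A.carrier → A.carrier) (hf : IsPol1 A f)
    (hmin : IsMinSetA A α β (Set.range f))
    (hfab : β (f a) (f b) ∧ ¬ α (f a) (f b)) :
    IsCongA A (betaPrime A α (f a) (f b)) ∧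
      (∀ x y, betaPrime A α (f a) (f b) x y ↔ β x y) :=
  betaPrime_is_congruence_and_eq_general A dT hd α β hcov a b f hfab
end

section
/- Let R be a subdirect product of finite regular SMB algebras A₁, ..., Aₙ, let W ⊆ {1,...,n}, and for each i ∈ W let (αᵢ, βᵢ) be a covering pair of congruences of Aᵢ with βᵢ below the Rees congruence θᵢ. Suppose that for all i, j ∈ W the pairs (αᵢ, βᵢ) and (αⱼ, βⱼ) cannot be separated with respect to R. Then R is ᾱβ̄-aligned: for every tuple a ∈ R and all i, j ∈ W, a(i) is an (αᵢ,βᵢ)-split element if and only if a(j) is an (αⱼ,βⱼ)-split element. -/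
theorem SMB.not_isSplit_iff_mapsC_meet {A : Type} (S : SMB A) (α β : A → A → Prop) (a : A) :
    ¬ S.IsSplit α β a ↔ MapsC (S.meet a) β α := by
  simp only [SMB.IsSplit, MapsC, not_exists, not_and, not_not]

theorem coordEval_meet_const {n : ℕ} {A : Fin n → Type} (S : ∀ i, SMB (A i))
    (R : Set (∀ i, A i)) (a : {r : ∀ i, A i // r ∈ R}) (k : Fin n) :
    coordEval S R (.meet (.const a) .var) k = (S k).meet (a.1 k) :=
  rfl

/-- The polynomial `x ↦ a ∧ x` of `R` separates a coordinate where `a` is split from one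
where it is not. -/
theorem sepWrt_of_isSplit_of_not_isSplit {n : ℕ} {A : Fin n → Type} (S : ∀ i, SMB (A i))
    (R : Set (∀ i, A i)) {a : ∀ i, A i} (ha : a ∈ R) {i j : Fin n}
    {α β : A i → A i → Prop} {γ δ : A j → A j → Prop}
    (hi : (S i).IsSplit α β (a i)) (hj : ¬ (S j).IsSplit γ δ (a j)) :
    SepWrt S R i α β j γ δ :=
  ⟨.meet (.const ⟨a, ha⟩) .var,
    by rwa [coordEval_meet_const, ← SMB.not_isSplit_iff_mapsC_meet, not_not],
    by rwa [coordEval_meet_const, ← SMB.not_isSplit_iff_mapsC_meet]⟩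

theorem nonseparable_implies_aligned_general {n : ℕ} {A : Fin n → Type}
    (S : ∀ i, RegSMB (A i))
    (R : Set (∀ i, A i))
    (W : Set (Fin n)) (α β : ∀ i, A i → A i → Prop)
    (hnosep : ∀ i ∈ W, ∀ j ∈ W,
      ¬ SepWrt (fun k => (S k).toSMB) R i (α i) (β i) j (α j) (β j)) :
    ∀ a ∈ R, ∀ i ∈ W, ∀ j ∈ W,
      (SMB.IsSplit (S i).toSMB (α i) (β i) (a i) ↔
        SMB.IsSplit (S j).toSMB (α j) (β j) (a j)) := by
  have split_transfer : ∀ a ∈ R, ∀ i ∈ W, ∀ j ∈ W,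
      (S i).IsSplit (α i) (β i) (a i) → (S j).IsSplit (α j) (β j) (a j) :=
    fun a ha i hi j hj hsplit => by_contra fun hns =>
      hnosep i hi j hj (sepWrt_of_isSplit_of_not_isSplit _ R ha hsplit hns)
  exact fun a ha i hi j hj => ⟨split_transfer a ha i hi j hj, split_transfer a ha j hj i hi⟩

/-- if all the covering pairs `(αᵢ, βᵢ)`, `i ∈ W`, are pairwise
non-separable with respect to the subdirect product `R`, then `R` is `ᾱβ̄`-aligned. -/
theorem nonseparable_implies_aligned {n : ℕ} {A : Fin n → Type} [∀ i, Fintype (A i)]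
    (S : ∀ i, RegSMB (A i))
    (M : ∀ i, Set (A i)) (hM : ∀ i, SMB.IsMinClass (S i).toSMB (M i))
    (R : Set (∀ i, A i)) (hR : SubdirectSMB (fun i => (S i).toSMB) R)
    (W : Set (Fin n)) (α β : ∀ i, A i → A i → Prop)
    (hcov : ∀ i ∈ W, SMB.IsCover (S i).toSMB (α i) (β i))
    (hθ : ∀ i ∈ W, CongLE (β i) (reesCong (M i)))
    (hnosep : ∀ i ∈ W, ∀ j ∈ W,
      ¬ SepWrt (fun k => (S k).toSMB) R i (α i) (β i) j (α j) (β j)) :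
    ∀ a ∈ R, ∀ i ∈ W, ∀ j ∈ W,
      (SMB.IsSplit (S i).toSMB (α i) (β i) (a i) ↔
        SMB.IsSplit (S j).toSMB (α j) (β j) (a j)) :=
  nonseparable_implies_aligned_general S R W α β hnosep
end

section
/- Let R be a subdirect product of finite regular SMB algebras A₁, ..., Aₙ, let (i, α, β) be such that α ≺ β ≤ θᵢ (the Rees congruence of Aᵢ), and let f ∈ Pol₁(R) be an (α,β)-collapsing polynomial. If j is an index such that for every covering pair γ ≺ δ ≤ θⱼ in Con(Aⱼ), (α,β) can be separated from (γ,δ) with respect to R, then |fⱼ(Aⱼ)| = 1 and the unique element of fⱼ(Aⱼ) lies in min(Aⱼ). -/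
/-- `p` (a unary polynomial of `R` with constants from `R`) is an `(α,β)`-collapsing
polynomial for the triple `(i, α, β)`. -/
def IsCollapsing {n : ℕ} {A : Fin n → Type} (S : ∀ i, RegSMB (A i))
    (M : ∀ i, Set (A i)) (R : Set (∀ i, A i))
    (i : Fin n) (α β : A i → A i → Prop)
    (p : PTerm {r : ∀ i, A i // r ∈ R}) : Prop :=
  (∀ (k : Fin n) (x : A k),
      coordEval (fun l => (S l).toSMB) R p k (coordEval (fun l => (S l).toSMB) R p k x) =
        coordEval (fun l => (S l).toSMB) R p k x) ∧
  (∀ (k : Fin n) (x : A k), coordEval (fun l => (S l).toSMB) R p k x ∈ M k) ∧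
  (∀ (k : Fin n) (γ δ : A k → A k → Prop),
      SMB.IsCover (S k).toSMB γ δ → CongLE δ (reesCong (M k)) →
      SepWrt (fun l => (S l).toSMB) R i α β k γ δ →
      MapsC (coordEval (fun l => (S l).toSMB) R p k) δ γ) ∧
  (∀ (k : Fin n) (γ δ : A k → A k → Prop),
      SMB.IsCover (S k).toSMB γ δ → CongLE δ (reesCong (M k)) →
      ¬ SepWrt (fun l => (S l).toSMB) R i α β k γ δ →
      SMB.IsMinSet (S k).toSMB γ δ (Set.range (coordEval (fun l => (S l).toSMB) R p k)))

/-!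
Let `f = pⱼ` and `θ = reesCong (M j)`. Every pair `f a, f b` is `θ`-related because `f` maps
into `min Aⱼ`. If `f a, f b` are `δ`-related for a congruence `0 < δ ≤ θ`, pick a cover `γ ≺ δ`;
since `(α,β)` is separated from `(γ,δ)`, the collapsing polynomial maps `δ` into `γ`, and by
idempotence `f a = f (f a)` and `f b = f (f b)` are `γ`-related. Descending through the finite
lattice of congruences ends at `0`, so `f a = f b`.
-/

namespace SMB

variable {A : Type} (S : SMB A)

theorem isCong_eq : S.IsCong (· = ·) :=
  ⟨eq_equivalence, by rintro _ _ _ _ rfl rfl; rfl, by rintro _ _ _ _ _ _ rfl rfl rfl; rfl⟩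

theorem isCover_of_maximal {γ δ : A → A → Prop} (hδ : S.IsCong δ)
    (hγ : Maximal (fun γ' => S.IsCong γ' ∧ γ' < δ) γ) : S.IsCover γ δ := by
  obtain ⟨⟨hγ, hγδ⟩, hmax⟩ := hγ
  refine ⟨hγ, hδ, hγδ.le, hγδ.not_ge, fun γ' hγ' hγγ' hγ'δ => ?_⟩
  by_cases hδγ' : δ ≤ γ'
  · exact Or.inr hδγ'
  · exact Or.inl (hmax ⟨hγ', lt_of_le_not_ge hγ'δ hδγ'⟩ hγγ')

theorem exists_isCover [Finite A] {δ : A → A → Prop} (hδ : S.IsCong δ)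
    (hne : ¬ δ ≤ (· = ·)) : ∃ γ, S.IsCover γ δ := by
  have hbot : (· = ·) < δ := lt_of_le_not_ge (fun a _ h => h ▸ hδ.1.refl a) hne
  obtain ⟨γ, hγ⟩ := (Set.toFinite {γ' | S.IsCong γ' ∧ γ' < δ}).exists_maximal
    ⟨_, S.isCong_eq, hbot⟩
  exact ⟨γ, S.isCover_of_maximal hδ hγ⟩

theorem eq_of_rel_of_mapsC_isCover [Finite A] {f : A → A} (hf : ∀ x, f (f x) = f x)
    {θ : A → A → Prop} (hcol : ∀ γ δ, S.IsCover γ δ → δ ≤ θ → MapsC f δ γ)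
    (δ : A → A → Prop) (hδ : S.IsCong δ) (hδθ : δ ≤ θ) (a b : A) (hab : δ (f a) (f b)) :
    f a = f b := by
  induction δ using WellFoundedLT.induction generalizing a b with
  | _ δ ih =>
    by_cases htriv : δ ≤ (· = ·)
    · exact htriv _ _ hab
    obtain ⟨γ, hγ⟩ := S.exists_isCover hδ htriv
    have hγab : γ (f a) (f b) := by simpa only [hf] using hcol γ δ hγ hδθ _ _ hab
    exact ih γ (lt_of_le_not_ge hγ.2.2.1 hγ.2.2.2.1) hγ.1 (le_trans hγ.2.2.1 hδθ) a b hγab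

theorem isCong_reesCong {M : Set A} (hmeet : ∀ a b, a ∈ M ∨ b ∈ M → S.meet a b ∈ M)
    (hd : ∀ a b c, a ∈ M ∨ b ∈ M ∨ c ∈ M → S.d a b c ∈ M) : S.IsCong (reesCong M) := by
  refine ⟨⟨fun _ => Or.inl rfl, Or.imp Eq.symm And.symm, ?_⟩, ?_, ?_⟩
  · rintro a b c (rfl | ⟨ha, hb⟩) hbc
    · exact hbc
    · rcases hbc with rfl | ⟨-, hc⟩
      exacts [Or.inr ⟨ha, hb⟩, Or.inr ⟨ha, hc⟩]
  · rintro a b a' b' (rfl | ⟨ha, ha'⟩) (rfl | ⟨hb, hb'⟩)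
    exacts [Or.inl rfl, Or.inr ⟨hmeet _ _ (.inr hb), hmeet _ _ (.inr hb')⟩,
      Or.inr ⟨hmeet _ _ (.inl ha), hmeet _ _ (.inl ha')⟩,
      Or.inr ⟨hmeet _ _ (.inl ha), hmeet _ _ (.inl ha')⟩]
  · rintro a b c a' b' c' (rfl | ⟨ha, ha'⟩) (rfl | ⟨hb, hb'⟩) (rfl | ⟨hc, hc'⟩)
    all_goals first
      | exact Or.inl rfl
      | exact Or.inr ⟨hd _ _ _ (by tauto), hd _ _ _ (by tauto)⟩

theorem meet_mem_of_isMinClass {M : Set A} (hM : S.IsMinClass M) (a b : A)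
    (hab : a ∈ M ∨ b ∈ M) : S.meet a b ∈ M := by
  obtain ⟨m, rfl, hmin⟩ := hM
  rcases hab with ha | hb
  · exact S.sim_equiv.trans (S.sim_meet ha (S.sim_equiv.refl b)) (hmin b)
  · exact S.sim_equiv.trans (S.sim_meet (S.sim_equiv.refl a) hb)
      (S.sim_equiv.trans (S.meet_comm_sim a m) (hmin a))

end SMB

namespace RegSMB

variable {A : Type} (S : RegSMB A)

theorem d_mem_of_isMinClass {M : Set A} (hM : S.IsMinClass M) (a b c : A)
    (habc : a ∈ M ∨ b ∈ M ∨ c ∈ M) : S.d a b c ∈ M := by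
  have hmeet := S.meet_mem_of_isMinClass hM
  have h : S.meet (S.meet a b) c ∈ M := by
    rcases habc with h | h | h
    exacts [hmeet _ _ (.inl (hmeet _ _ (.inl h))), hmeet _ _ (.inl (hmeet _ _ (.inr h))),
      hmeet _ _ (.inr h)]
  obtain ⟨m, rfl, -⟩ := hM
  exact S.sim_equiv.trans (S.reg1 a b c) h

theorem isCong_reesCong {M : Set A} (hM : S.IsMinClass M) : S.IsCong (reesCong M) :=
  S.toSMB.isCong_reesCong (S.meet_mem_of_isMinClass hM) (S.d_mem_of_isMinClass hM)

end RegSMB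

theorem collapsing_to_singleton_general {n : ℕ} {A : Fin n → Type} [∀ i, Fintype (A i)]
    (S : ∀ i, RegSMB (A i))
    (M : ∀ i, Set (A i)) (hM : ∀ i, SMB.IsMinClass (S i).toSMB (M i))
    (R : Set (∀ i, A i))
    (i : Fin n) (α β : A i → A i → Prop)
    (p : PTerm {r : ∀ i, A i // r ∈ R}) (hp : IsCollapsing S M R i α β p)
    (j : Fin n)
    (hj : ∀ γ δ : A j → A j → Prop,
      SMB.IsCover (S j).toSMB γ δ → CongLE δ (reesCong (M j)) →
      SepWrt (fun l => (S l).toSMB) R i α β j γ δ) :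
    ∃ m ∈ M j, ∀ x : A j, coordEval (fun l => (S l).toSMB) R p j x = m := by
  obtain ⟨hidem, himg, hsep, -⟩ := hp
  obtain ⟨m, -, -⟩ := hM j
  refine ⟨_, himg j m, fun x => ?_⟩
  exact (S j).toSMB.eq_of_rel_of_mapsC_isCover (hidem j)
    (fun γ δ hγδ hδθ => hsep j γ δ hγδ hδθ (hj γ δ hγδ hδθ))
    _ ((S j).isCong_reesCong (hM j)) le_rfl x m (Or.inr ⟨himg j x, himg j m⟩)

/-- if `f` is an `(α,β)`-collapsing polynomial of the subdirect product
`R` of finite regular SMB algebras and `(α,β)` can be separated from every covering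
pair `γ ≺ δ ≤ θⱼ` of `Aⱼ`, then `fⱼ(Aⱼ)` is a singleton contained in `min Aⱼ`. -/
theorem collapsing_to_singleton {n : ℕ} {A : Fin n → Type} [∀ i, Fintype (A i)]
    (S : ∀ i, RegSMB (A i))
    (M : ∀ i, Set (A i)) (hM : ∀ i, SMB.IsMinClass (S i).toSMB (M i))
    (R : Set (∀ i, A i)) (hR : SubdirectSMB (fun i => (S i).toSMB) R)
    (i : Fin n) (α β : A i → A i → Prop)
    (hcov : SMB.IsCover (S i).toSMB α β) (hβθ : CongLE β (reesCong (M i)))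
    (p : PTerm {r : ∀ i, A i // r ∈ R}) (hp : IsCollapsing S M R i α β p)
    (j : Fin n)
    (hj : ∀ γ δ : A j → A j → Prop,
      SMB.IsCover (S j).toSMB γ δ → CongLE δ (reesCong (M j)) →
      SepWrt (fun l => (S l).toSMB) R i α β j γ δ) :
    ∃ m ∈ M j, ∀ x : A j, coordEval (fun l => (S l).toSMB) R p j x = m :=
  collapsing_to_singleton_general S M hM R i α β p hp j hj
end
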